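/- arXiv:2404.06061 — 2 statements merged into one kernel-verified Lean document; each statement's English description precedes it below -/
import Mathlib

section
/- Let S be an invertible n×n real matrix of the form S = C(I - M) with C invertible, let P = ∑_{i=0}^{m} M^i C^{-1}, let E = I - S·P (the exact truncation error), and let E' be any n×n matrix such that both I - E and I - E' are invertible. Define S_app^{-1} = P(I - E')^{-1}. Then S^{-1} - S_app^{-1} = S^{-1}(E - E')(I - E')^{-1}. -/
theorem self_sub_mul_one_sub_mul_eq_of_mul_eq_one {R : Type*} [Ring R] (a e e' w : R)
    (hw : (1 - e') * w = 1) :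
    a - a * (1 - e) * w = a * (e - e') * w := by
  calc a - a * (1 - e) * w = a * ((1 - e') * w) - a * (1 - e) * w := by rw [hw, mul_one]
    _ = a * (e - e') * w := by noncomm_ring

theorem approx_inverse_error_identity_general {n : ℕ}
    (C M E' : Matrix (Fin n) (Fin n) ℝ)
    (hS : IsUnit (C * (1 - M)))
    (P : Matrix (Fin n) (Fin n) ℝ)
    (E : Matrix (Fin n) (Fin n) ℝ)
    (hE : E = 1 - (C * (1 - M)) * P)
    (h2 : IsUnit ((1 : Matrix (Fin n) (Fin n) ℝ) - E')) :
    (C * (1 - M))⁻¹ - P * (1 - E')⁻¹ =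
      (C * (1 - M))⁻¹ * (E - E') * (1 - E')⁻¹ := by
  have hP : P = (C * (1 - M))⁻¹ * (1 - E) := by
    rw [hE, sub_sub_cancel, Matrix.nonsing_inv_mul_cancel_left _ _
      ((Matrix.isUnit_iff_isUnit_det _).mp hS)]
  rw [hP]
  exact self_sub_mul_one_sub_mul_eq_of_mul_eq_one _ _ _ _
    (Matrix.mul_nonsing_inv _ ((Matrix.isUnit_iff_isUnit_det _).mp h2))

theorem approx_inverse_error_identity {n : ℕ}
    (C M E' : Matrix (Fin n) (Fin n) ℝ) (hC : IsUnit C)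
    (hS : IsUnit (C * (1 - M))) (m : ℕ)
    (P : Matrix (Fin n) (Fin n) ℝ)
    (hP : P = ∑ i ∈ Finset.range (m + 1), M ^ i * C⁻¹)
    (E : Matrix (Fin n) (Fin n) ℝ)
    (hE : E = 1 - (C * (1 - M)) * P)
    (h1 : IsUnit ((1 : Matrix (Fin n) (Fin n) ℝ) - E))
    (h2 : IsUnit ((1 : Matrix (Fin n) (Fin n) ℝ) - E')) :
    (C * (1 - M))⁻¹ - P * (1 - E')⁻¹ =
      (C * (1 - M))⁻¹ * (E - E') * (1 - E')⁻¹ :=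
  approx_inverse_error_identity_general C M E' hS P E hE h2
end

section
/- Under the hypotheses of the previous identity (S invertible with S^{-1} = P(I-E)^{-1}, and S_app^{-1} = P(I-E')^{-1} with I-E' invertible), for any submultiplicative matrix norm ‖·‖ we have ‖S^{-1} - S_app^{-1}‖ ≤ ‖S^{-1}‖ · ‖E - E'‖ · ‖(I - E')^{-1}‖. -/
/-!
Since `S * P = 1 - E`, we have `P = S⁻¹ * (1 - E)`, and writing `S⁻¹ = S⁻¹ * (1 - E') * (1 - E')⁻¹`
gives the exact factorization `S⁻¹ - P * (1 - E')⁻¹ = S⁻¹ * (E - E') * (1 - E')⁻¹`.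
Submultiplicativity of the norm then bounds the three factors separately.
-/

theorem Matrix.inv_sub_mul_inv_one_sub_eq {ι R : Type*} [Fintype ι] [DecidableEq ι] [CommRing R]
    {S P E E' : Matrix ι ι R} (hS : IsUnit S) (hE' : IsUnit (1 - E')) (hSP : S * P = 1 - E) :
    S⁻¹ - P * (1 - E')⁻¹ = S⁻¹ * (E - E') * (1 - E')⁻¹ := by
  have hP : P = S⁻¹ * (1 - E) := by
    rw [← hSP, Matrix.nonsing_inv_mul_cancel_left _ _ ((Matrix.isUnit_iff_isUnit_det S).mp hS)]
  calc S⁻¹ - P * (1 - E')⁻¹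
      = S⁻¹ * ((1 - E') * (1 - E')⁻¹) - S⁻¹ * (1 - E) * (1 - E')⁻¹ := by
        rw [Matrix.mul_nonsing_inv _ ((Matrix.isUnit_iff_isUnit_det _).mp hE'), mul_one, hP]
    _ = S⁻¹ * (E - E') * (1 - E')⁻¹ := by noncomm_ring

theorem le_mul_mul_of_submultiplicative {α : Type*} [Mul α] {N : α → ℝ} (hnonneg : ∀ x, 0 ≤ N x)
    (hmul : ∀ x y, N (x * y) ≤ N x * N y) (a b c : α) :
    N (a * b * c) ≤ N a * N b * N c :=
  (hmul _ _).trans (mul_le_mul_of_nonneg_right (hmul _ _) (hnonneg _))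

theorem approx_inverse_error_bound_general {n : ℕ}
    (C M E' : Matrix (Fin n) (Fin n) ℝ)
    (hS : IsUnit (C * (1 - M)))
    (P : Matrix (Fin n) (Fin n) ℝ)
    (E : Matrix (Fin n) (Fin n) ℝ)
    (hE : E = 1 - (C * (1 - M)) * P)
    (h2 : IsUnit ((1 : Matrix (Fin n) (Fin n) ℝ) - E'))
    (N : Matrix (Fin n) (Fin n) ℝ → ℝ)
    (hnonneg : ∀ X, 0 ≤ N X)
    (hsub : ∀ X Y, N (X * Y) ≤ N X * N Y) :
    N ((C * (1 - M))⁻¹ - P * (1 - E')⁻¹) ≤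
      N ((C * (1 - M))⁻¹) * N (E - E') * N ((1 - E')⁻¹) := by
  have hSP : C * (1 - M) * P = 1 - E := by rw [hE, sub_sub_cancel]
  rw [Matrix.inv_sub_mul_inv_one_sub_eq hS h2 hSP]
  exact le_mul_mul_of_submultiplicative hnonneg hsub _ _ _

theorem approx_inverse_error_bound {n : ℕ}
    (C M E' : Matrix (Fin n) (Fin n) ℝ) (hC : IsUnit C)
    (hS : IsUnit (C * (1 - M))) (m : ℕ)
    (P : Matrix (Fin n) (Fin n) ℝ)
    (hP : P = ∑ i ∈ Finset.range (m + 1), M ^ i * C⁻¹)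
    (E : Matrix (Fin n) (Fin n) ℝ)
    (hE : E = 1 - (C * (1 - M)) * P)
    (h1 : IsUnit ((1 : Matrix (Fin n) (Fin n) ℝ) - E))
    (h2 : IsUnit ((1 : Matrix (Fin n) (Fin n) ℝ) - E'))
    (N : Matrix (Fin n) (Fin n) ℝ → ℝ)
    (hnonneg : ∀ X, 0 ≤ N X)
    (hadd : ∀ X Y, N (X + Y) ≤ N X + N Y)
    (hneg : ∀ X, N (-X) = N X)
    (hsub : ∀ X Y, N (X * Y) ≤ N X * N Y) :
    N ((C * (1 - M))⁻¹ - P * (1 - E')⁻¹) ≤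
      N ((C * (1 - M))⁻¹) * N (E - E') * N ((1 - E')⁻¹) :=
  approx_inverse_error_bound_general C M E' hS P E hE h2 N hnonneg hsub
end
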